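/- arXiv:2508.09929 — 2 statements merged into one kernel-verified Lean document; each statement's English description precedes it below -/
import Mathlib

section
/- Let G be a finite group, H a group, φ : G → H an injective homomorphism, N the normalizer of φ(G) in H, and α : N → Out(G) the composition of the conjugation map N → Aut(G) with the projection Aut(G) → Out(G). Then the number of conjugacy classes (under conjugation in N) of injective homomorphisms ψ : G → H with ψ(G) = φ(G) equals |Out(G)| / |image(α)|. -/
/-- Inner-equivalence on automorphisms: `ψ₁ ∼ ψ₂` iff they differ by an inner
automorphism; the quotient `Quot (innRel G)` is `Out(G)`. -/
def innRel (G : Type*) [Group G] : MulAut G → MulAut G → Prop :=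
  fun ψ₁ ψ₂ => ∃ g₀ : G, ∀ g : G, ψ₂ g = g₀ * ψ₁ g * g₀⁻¹

/-!
Precomposition with automorphisms identifies the embeddings `ψ` with `ψ(G) = φ(G)` with
`Aut(G)`, and conjugating by `n ∈ N` becomes left multiplication by `α n`; so the classes are
the right cosets of `M = α(N)`. As `M` contains `Inn(G)` (conjugation by `φ g` induces it),
`[Aut(G) : M] = [Out(G) : M / Inn(G)] = |Out(G)| / |M / Inn(G)|`.
-/
def innerAut (G : Type*) [Group G] : Subgroup (MulAut G) := (MulAut.conj : G →* MulAut G).range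

section Out

variable {G : Type*} [Group G]

lemma mul_conj_mul_inv (σ : MulAut G) (g : G) :
    σ * MulAut.conj g * σ⁻¹ = MulAut.conj (σ g) := by
  ext x
  simp [MulAut.conj_apply]

instance innerAut_normal : (innerAut G).Normal where
  conj_mem := by
    rintro _ ⟨g, rfl⟩ σ
    exact ⟨σ g, (mul_conj_mul_inv σ g).symm⟩

lemma innRel_iff_exists_conj_mul {ψ₁ ψ₂ : MulAut G} :
    innRel G ψ₁ ψ₂ ↔ ∃ g₀ : G, MulAut.conj g₀ * ψ₁ = ψ₂ := by
  simp only [innRel, MulEquiv.ext_iff, MulAut.mul_apply, MulAut.conj_apply, eq_comm]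

lemma innRel_iff_inv_mul_mem {ψ₁ ψ₂ : MulAut G} :
    innRel G ψ₁ ψ₂ ↔ ψ₁⁻¹ * ψ₂ ∈ innerAut G := by
  rw [innRel_iff_exists_conj_mul, ← innerAut_normal.mem_comm_iff]
  exact exists_congr fun _ => eq_mul_inv_iff_mul_eq.symm

def quotInnRelEquiv : Quot (innRel G) ≃ MulAut G ⧸ innerAut G :=
  Quot.congrRight fun _ _ => innRel_iff_inv_mul_mem.trans QuotientGroup.leftRel_apply.symm

lemma card_range_mk_innRel {K : Type*} [Group K] (α : K →* MulAut G) :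
    Nat.card (Set.range fun k => Quot.mk (innRel G) (α k)) =
      Nat.card (α.range.map (QuotientGroup.mk' (innerAut G))) := by
  rw [← Nat.card_image_of_injective quotInnRelEquiv.injective, ← Set.range_comp,
    ← MonoidHom.range_comp]
  rfl

end Out

theorem Subgroup.index_eq_card_quotient_div_card_map {A : Type*} [Group A] {I M : Subgroup A}
    [I.Normal] [Finite (A ⧸ I)] (hIM : I ≤ M) :
    M.index = Nat.card (A ⧸ I) / Nat.card (M.map (QuotientGroup.mk' I)) := by
  have hmap : (M.map (QuotientGroup.mk' I)).index = M.index :=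
    index_map_eq _ (QuotientGroup.mk'_surjective I) (by rwa [QuotientGroup.ker_mk'])
  rw [← hmap, ← card_mul_index, Nat.mul_div_cancel_left _ Nat.card_pos]

namespace MonoidHom

variable {G H : Type*} [Group G] [Group H] {φ : G →* H}

lemma range_comp_mulAut (σ : MulAut G) : (φ.comp (σ : G →* G)).range = φ.range := by
  rw [range_comp, MulEquiv.range_eq_top, ← range_eq_map]

noncomputable def mulAutEquivEmbeddingsWithRange (hφ : Function.Injective φ) :
    MulAut G ≃ {ψ : G →* H // Function.Injective ψ ∧ ψ.range = φ.range} where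
  toFun σ := ⟨φ.comp (σ : G →* G), hφ.comp σ.injective, range_comp_mulAut σ⟩
  invFun ψ :=
    ((ofInjective ψ.2.1).trans (MulEquiv.subgroupCongr ψ.2.2)).trans (ofInjective hφ).symm
  left_inv σ := by ext g; apply hφ; simp [ofInjective_apply]
  right_inv ψ := by ext g; simp [ofInjective_apply]

end MonoidHom

section Normalizer

variable {G H : Type*} [Group G] [Group H] {φ : G →* H} (hφ : Function.Injective φ)
  {α : Subgroup.normalizer (φ.range : Set H) →* MulAut G}
  (hα : ∀ (n : Subgroup.normalizer (φ.range : Set H)) (g : G), φ (α n g) = (n : H) * φ g * (n : H)⁻¹)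
include hφ hα

lemma mul_eq_iff_forall_conj (n : Subgroup.normalizer (φ.range : Set H)) (σ₁ σ₂ : MulAut G) :
    α n * σ₁ = σ₂ ↔ ∀ g, φ (σ₂ g) = n * φ (σ₁ g) * (n : H)⁻¹ := by
  rw [MulEquiv.ext_iff]
  refine forall_congr' fun g => ?_
  rw [MulAut.mul_apply, ← hα, eq_comm, hφ.eq_iff]

lemma exists_conj_iff_mul_inv_mem_range (σ₁ σ₂ : MulAut G) :
    (∃ n ∈ Subgroup.normalizer (φ.range : Set H), ∀ g, φ (σ₂ g) = n * φ (σ₁ g) * n⁻¹) ↔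
      σ₂ * σ₁⁻¹ ∈ α.range := by
  simp only [MonoidHom.mem_range, eq_mul_inv_iff_mul_eq, mul_eq_iff_forall_conj hφ hα,
    Subtype.exists, exists_prop]

lemma innerAut_le_range : innerAut G ≤ α.range := by
  rintro _ ⟨g₀, rfl⟩
  have hmem : φ g₀ ∈ Subgroup.normalizer (φ.range : Set H) :=
    Subgroup.le_normalizer ⟨g₀, rfl⟩
  refine ⟨⟨φ g₀, hmem⟩, ?_⟩
  rw [← mul_one (α _), mul_eq_iff_forall_conj hφ hα]
  simp [MulAut.conj_apply]

lemma card_quot_conj_eq_index :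
    Nat.card (Quot (fun (ψ₁ ψ₂ : {ψ : G →* H // Function.Injective ψ ∧ ψ.range = φ.range}) =>
        ∃ n ∈ Subgroup.normalizer (φ.range : Set H), ∀ g : G, ψ₂.1 g = n * ψ₁.1 g * n⁻¹)) =
      α.range.index := by
  refine Nat.card_congr <|
    (Quot.congr (MonoidHom.mulAutEquivEmbeddingsWithRange hφ) fun σ₁ σ₂ => ?_).symm.trans
      (QuotientGroup.quotientRightRelEquivQuotientLeftRel α.range)
  rw [QuotientGroup.rightRel_apply]
  exact (exists_conj_iff_mul_inv_mem_range hφ hα σ₁ σ₂).symm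

end Normalizer

theorem stmt_6 (G H : Type*) [Group G] [Finite G] [Group H]
    (φ : G →* H) (hφ : Function.Injective φ)
    (α : Subgroup.normalizer (φ.range : Set H) →* MulAut G)
    (hα : ∀ (n : Subgroup.normalizer (φ.range : Set H)) (g : G), φ (α n g) = (n : H) * φ g * (n : H)⁻¹) :
    Nat.card (Quot (fun (ψ₁ ψ₂ : {ψ : G →* H // Function.Injective ψ ∧ ψ.range = φ.range}) =>
        ∃ n ∈ Subgroup.normalizer (φ.range : Set H), ∀ g : G, ψ₂.1 g = n * ψ₁.1 g * n⁻¹)) =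
      Nat.card (Quot (innRel G)) /
        Nat.card (Set.range fun n : Subgroup.normalizer (φ.range : Set H) => Quot.mk (innRel G) (α n)) := by
  rw [card_quot_conj_eq_index hφ hα, Nat.card_congr quotInnRelEquiv, card_range_mk_innRel]
  exact Subgroup.index_eq_card_quotient_div_card_map (innerAut_le_range hφ hα)
end

section
/- For the group G = C_t × D_n with t ≥ 2 and n ≥ 3 odd, acting linearly on P² = P(1 ⊕ V_{χ,ψ}) where χ is a primitive character of C_t and V_ψ is the faithful 2-dimensional representation of D_n induced from a primitive character ψ of C_n ⊂ D_n: the generic stabilizer of the invariant line P(V_{χ,ψ}) is C_t × 1, and it acts on the normal directions to this line with character χ⁻¹ (equivalently, the fixed point [1:0:0] has C_t acting on the tangent space P(V) with weights (χ, χ)). -/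
/-!
An element `(a, x)` of `C_t × D_n` stabilizes `{x₁ = 0}` pointwise iff it acts there by a scalar.
A reflection `sr j` swaps the two coordinate axes of the line, so it never does; a rotation
`r j` acts by `diag(χ(a)ψ(j), χ(a)ψ(j)⁻¹)`, which is scalar iff `ψ(j)² = 1`, i.e. (`ψ` being
faithful) iff `2j = 0` in `ZMod n`, which for odd `n` forces `j = 0`. On `C_t × 1` the
representation is `diag(1, χ, χ)`: relative to the scalar `χ` on the line, the normal
direction `x₀` is scaled by `1 = χ · χ⁻¹`.
-/

open Matrix

theorem Matrix.diagonal_mulVec_eq_smul_iff {ι R : Type*} [Fintype ι] [DecidableEq ι] [Semiring R]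
    [IsRightCancelMulZero R] (d v : ι → R) (c : R) :
    diagonal d *ᵥ v = c • v ↔ ∀ i, v i ≠ 0 → d i = c := by
  simp only [funext_iff, mulVec_diagonal, Pi.smul_apply, smul_eq_mul]
  refine forall_congr' fun i => ⟨fun h hv => mul_right_cancel₀ hv h, fun h => ?_⟩
  by_cases hv : v i = 0
  · simp [hv]
  · rw [h hv]

theorem ZMod.eq_zero_of_neg_eq_self {n : ℕ} (hn : Odd n) {a : ZMod n} (h : -a = a) : a = 0 :=
  ((ZMod.neg_eq_self_iff a).mp h).resolve_right fun h2 =>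
    Nat.not_even_iff_odd.mpr hn ⟨a.val, by omega⟩

theorem ZMod.eq_zero_of_map_ofAdd_eq_inv {n : ℕ} (hn : Odd n) {M : Type*} [Group M]
    {ψ : Multiplicative (ZMod n) →* M} (hψ : Function.Injective ψ) {j : ZMod n}
    (h : ψ (Multiplicative.ofAdd j) = (ψ (Multiplicative.ofAdd j))⁻¹) : j = 0 := by
  have hneg : ψ (Multiplicative.ofAdd (-j)) = ψ (Multiplicative.ofAdd j) := by
    rw [ofAdd_neg, map_inv, ← h]
  exact ZMod.eq_zero_of_neg_eq_self hn (Multiplicative.ofAdd.injective (hψ hneg))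

theorem stmt_15_general (t n : ℕ) (hodd : Odd n)
    (χfun : Multiplicative (ZMod t) →* ℂˣ)
    (ψfun : Multiplicative (ZMod n) →* ℂˣ) (hψ : Function.Injective ψfun)
    (ρ : Multiplicative (ZMod t) × DihedralGroup n →* GL (Fin 3) ℂ)
    (hρr : ∀ (a : Multiplicative (ZMod t)) (j : ZMod n),
      ((ρ (a, DihedralGroup.r j) : GL (Fin 3) ℂ) : Matrix (Fin 3) (Fin 3) ℂ) =
        Matrix.diagonal
          ![1, ((χfun a * ψfun (Multiplicative.ofAdd j) : ℂˣ) : ℂ),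
            ((χfun a * (ψfun (Multiplicative.ofAdd j))⁻¹ : ℂˣ) : ℂ)])
    (hρsr : ∀ (a : Multiplicative (ZMod t)) (j : ZMod n),
      ((ρ (a, DihedralGroup.sr j) : GL (Fin 3) ℂ) : Matrix (Fin 3) (Fin 3) ℂ) =
        !![1, 0, 0;
           0, 0, ((χfun a * (ψfun (Multiplicative.ofAdd j))⁻¹ : ℂˣ) : ℂ);
           0, ((χfun a * ψfun (Multiplicative.ofAdd j) : ℂˣ) : ℂ), 0]) :
    -- the generic stabilizer of the line `{x₁ = 0}` is `C_t × 1`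
    (∀ g : Multiplicative (ZMod t) × DihedralGroup n,
      (∀ v : Fin 3 → ℂ, v 0 = 0 → ∃ c : ℂ,
        Matrix.mulVec ((ρ g : GL (Fin 3) ℂ) : Matrix (Fin 3) (Fin 3) ℂ) v = c • v) ↔
      g.2 = 1) ∧
    -- it acts on the line by the scalar `χ` and on the normal direction by `χ⁻¹`
    (∀ a : Multiplicative (ZMod t), ∃ c : ℂˣ,
      (∀ v : Fin 3 → ℂ, v 0 = 0 →
        Matrix.mulVec ((ρ (a, 1) : GL (Fin 3) ℂ) : Matrix (Fin 3) (Fin 3) ℂ) v = (c : ℂ) • v) ∧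
      Matrix.mulVec ((ρ (a, 1) : GL (Fin 3) ℂ) : Matrix (Fin 3) (Fin 3) ℂ)
          (Pi.single 0 1 : Fin 3 → ℂ) =
        ((c * (χfun a)⁻¹ : ℂˣ) : ℂ) • (Pi.single (0 : Fin 3) 1 : Fin 3 → ℂ)) ∧
    -- equivalently, the tangent weights at the fixed point `[1:0:0]` are `(χ, χ)`
    (∀ a : Multiplicative (ZMod t),
      ((ρ (a, 1) : GL (Fin 3) ℂ) : Matrix (Fin 3) (Fin 3) ℂ) =
        Matrix.diagonal ![1, (χfun a : ℂ), (χfun a : ℂ)]) := by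
  have hρ_one (a) : ((ρ (a, 1) : GL (Fin 3) ℂ) : Matrix (Fin 3) (Fin 3) ℂ) =
      diagonal ![1, (χfun a : ℂ), (χfun a : ℂ)] := by
    simpa [← DihedralGroup.one_def] using hρr a 0
  have hρ_one_smul (a) (v : Fin 3 → ℂ) (hv : v 0 = 0) :
      ((ρ (a, 1) : GL (Fin 3) ℂ) : Matrix (Fin 3) (Fin 3) ℂ) *ᵥ v = (χfun a : ℂ) • v := by
    rw [hρ_one, diagonal_mulVec_eq_smul_iff]
    intro i hi
    fin_cases i <;> simp_all
  refine ⟨fun ⟨a, x⟩ => ⟨fun h => ?_, ?_⟩, fun a => ⟨χfun a, hρ_one_smul a, ?_⟩, hρ_one⟩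
  · cases x with
    | r j =>
      obtain ⟨c, hc⟩ := h ![0, 1, 1] rfl
      rw [hρr, diagonal_mulVec_eq_smul_iff] at hc
      have hψj : ψfun (.ofAdd j) = (ψfun (.ofAdd j))⁻¹ :=
        mul_left_cancel (Units.ext ((hc 1 (by simp)).trans (hc 2 (by simp)).symm))
      rw [ZMod.eq_zero_of_map_ofAdd_eq_inv hodd hψ hψj]
      rfl
    | sr j =>
      obtain ⟨c, hc⟩ := h ![0, 1, 0] rfl
      have h2 := congr_fun hc 2
      simp [hρsr, mulVec, dotProduct, Fin.sum_univ_three] at h2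
  · rintro (rfl : x = 1) v hv
    exact ⟨_, hρ_one_smul a v hv⟩
  · rw [hρ_one, mul_inv_cancel, Units.val_one, one_smul, mulVec_single_one]
    ext i
    fin_cases i <;> simp

/-- For `G = C_t × D_n` (`t ≥ 2`, `n ≥ 3` odd) acting on `P² = P(1 ⊕ V_{χ,ψ})`:
the generic stabilizer of the invariant line `{x₁ = 0}` is `C_t × 1`, acting on the line
by the scalar `χ` and hence on the normal direction with character `χ⁻¹`; equivalently,
at the fixed point the tangent weights are `(χ, χ)`. -/
theorem stmt_15 (t n : ℕ) (ht : 2 ≤ t) (hn : 3 ≤ n) (hodd : Odd n)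
    (χfun : Multiplicative (ZMod t) →* ℂˣ) (hχ : Function.Injective χfun)
    (ψfun : Multiplicative (ZMod n) →* ℂˣ) (hψ : Function.Injective ψfun)
    (ρ : Multiplicative (ZMod t) × DihedralGroup n →* GL (Fin 3) ℂ)
    (hρ : Function.Injective ρ)
    (hρr : ∀ (a : Multiplicative (ZMod t)) (j : ZMod n),
      ((ρ (a, DihedralGroup.r j) : GL (Fin 3) ℂ) : Matrix (Fin 3) (Fin 3) ℂ) =
        Matrix.diagonal
          ![1, ((χfun a * ψfun (Multiplicative.ofAdd j) : ℂˣ) : ℂ),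
            ((χfun a * (ψfun (Multiplicative.ofAdd j))⁻¹ : ℂˣ) : ℂ)])
    (hρsr : ∀ (a : Multiplicative (ZMod t)) (j : ZMod n),
      ((ρ (a, DihedralGroup.sr j) : GL (Fin 3) ℂ) : Matrix (Fin 3) (Fin 3) ℂ) =
        !![1, 0, 0;
           0, 0, ((χfun a * (ψfun (Multiplicative.ofAdd j))⁻¹ : ℂˣ) : ℂ);
           0, ((χfun a * ψfun (Multiplicative.ofAdd j) : ℂˣ) : ℂ), 0]) :
    -- the generic stabilizer of the line `{x₁ = 0}` is `C_t × 1`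
    (∀ g : Multiplicative (ZMod t) × DihedralGroup n,
      (∀ v : Fin 3 → ℂ, v 0 = 0 → ∃ c : ℂ,
        Matrix.mulVec ((ρ g : GL (Fin 3) ℂ) : Matrix (Fin 3) (Fin 3) ℂ) v = c • v) ↔
      g.2 = 1) ∧
    -- it acts on the line by the scalar `χ` and on the normal direction by `χ⁻¹`
    (∀ a : Multiplicative (ZMod t), ∃ c : ℂˣ,
      (∀ v : Fin 3 → ℂ, v 0 = 0 →
        Matrix.mulVec ((ρ (a, 1) : GL (Fin 3) ℂ) : Matrix (Fin 3) (Fin 3) ℂ) v = (c : ℂ) • v) ∧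
      Matrix.mulVec ((ρ (a, 1) : GL (Fin 3) ℂ) : Matrix (Fin 3) (Fin 3) ℂ)
          (Pi.single 0 1 : Fin 3 → ℂ) =
        ((c * (χfun a)⁻¹ : ℂˣ) : ℂ) • (Pi.single (0 : Fin 3) 1 : Fin 3 → ℂ)) ∧
    -- equivalently, the tangent weights at the fixed point `[1:0:0]` are `(χ, χ)`
    (∀ a : Multiplicative (ZMod t),
      ((ρ (a, 1) : GL (Fin 3) ℂ) : Matrix (Fin 3) (Fin 3) ℂ) =
        Matrix.diagonal ![1, (χfun a : ℂ), (χfun a : ℂ)]) :=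
  stmt_15_general t n hodd χfun ψfun hψ ρ hρr hρsr
end
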